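/- Let σ ∈ L_wbal(φ, γ, N). Then E(H_{n,σ}) ≤ (κ_n · log₂ n + N)/log₂(1 + φ(n)) for all n, where κ_n = log₂(2·φ(n)^{−1}(1+φ(n)))/log₂((1−γ)^{−1}); in particular E(H_{n,σ}) ≤ (1/log₂(1/(1−γ))) · (log₂(2φ(n)^{−1}(1+φ(n)))/log₂(1+φ(n))) · log₂(n) · (1+o(1)). -/

import Mathlib

inductive BTree
  | leaf : BTree
  | node : BTree → BTree → BTree
deriving DecidableEq

def BTree.size : BTree → ℕ
  | .leaf => 1
  | .node l r => l.size + r.size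

def BTree.height : BTree → ℕ
  | .leaf => 0
  | .node l r => 1 + max l.height r.height

noncomputable def Pσ (σ : ℕ → ℕ → ℝ) : BTree → ℝ
  | .leaf => 1
  | .node l r => σ l.size r.size * Pσ σ l * Pσ σ r

def trees : ℕ → Finset BTree
  | 0 => ∅
  | 1 => {BTree.leaf}
  | (n+2) => (Finset.Ico 1 (n+2)).attach.biUnion
      (fun k => ((trees k.1) ×ˢ (trees (n+2-k.1))).image (fun p => BTree.node p.1 p.2))
  decreasing_by
  · exact (Finset.mem_Ico.mp k.2).2
  · have h := (Finset.mem_Ico.mp k.2).1; omega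

noncomputable def expPow (σ : ℕ → ℕ → ℝ) (φ : ℝ) (n : ℕ) : ℝ :=
  ∑ t ∈ trees n, Pσ σ t * φ ^ t.height

noncomputable def expH (σ : ℕ → ℕ → ℝ) (n : ℕ) : ℝ :=
  ∑ t ∈ trees n, Pσ σ t * (t.height : ℝ)

lemma BTree.one_le_size (t : BTree) : 1 ≤ t.size := by
  induction t with
  | leaf => simp [BTree.size]
  | node l r hl hr => simp only [BTree.size]; omega

lemma size_of_mem_trees : ∀ n : ℕ, ∀ t ∈ trees n, t.size = n := by
  intro n
  induction n using Nat.strong_induction_on with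
  | _ n ih =>
    match n with
    | 0 => intro t ht; simp [trees] at ht
    | 1 =>
      intro t ht
      rw [trees, Finset.mem_singleton] at ht
      subst ht; rfl
    | (m+2) =>
      intro t ht
      rw [trees] at ht
      simp only [Finset.mem_biUnion, Finset.mem_attach, true_and, Finset.mem_image,
        Finset.mem_product, Subtype.exists, Prod.exists] at ht
      obtain ⟨k, hk, l, r, ⟨hl, hr⟩, rfl⟩ := ht
      have hk' := Finset.mem_Ico.mp hk
      have h1 := ih k (by omega) l hl
      have h2 := ih (m+2-k) (by omega) r hr
      simp only [BTree.size, h1, h2]; omega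

lemma sum_trees_eq (f : BTree → ℝ) (m : ℕ) :
    ∑ t ∈ trees (m+2), f t
      = ∑ k ∈ Finset.Ico 1 (m+2), ∑ l ∈ trees k, ∑ r ∈ trees (m+2-k), f (BTree.node l r) := by
  rw [trees, Finset.sum_biUnion]
  · rw [← Finset.sum_attach (Finset.Ico 1 (m+2))
        (fun k => ∑ l ∈ trees k, ∑ r ∈ trees (m+2-k), f (BTree.node l r))]
    refine Finset.sum_congr rfl fun k _ => ?_
    rw [Finset.sum_image, Finset.sum_product]
    rintro ⟨a, b⟩ _ ⟨a', b'⟩ _ h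
    simpa using h
  · intro a _ b _ hab
    simp only [Function.onFun]
    rw [Finset.disjoint_left]
    rintro t hta htb
    simp only [Finset.mem_image, Finset.mem_product, Prod.exists] at hta htb
    obtain ⟨l, r, ⟨hl, _⟩, rfl⟩ := hta
    obtain ⟨l', r', ⟨hl', _⟩, heq⟩ := htb
    have h1 := size_of_mem_trees _ l hl
    have h2 := size_of_mem_trees _ l' hl'
    injection heq with e1 e2
    exact hab (Subtype.ext (by rw [← h1, ← h2, e1]))

lemma Pσ_nonneg (σ : ℕ → ℕ → ℝ) (h : ∀ i j, 0 ≤ σ i j) : ∀ t, 0 ≤ Pσ σ t := by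
  intro t; induction t with
  | leaf => simp [Pσ]
  | node l r hl hr =>
    simp only [Pσ]
    exact mul_nonneg (mul_nonneg (h _ _) hl) hr

lemma sum_Pσ_eq_one (σ : ℕ → ℕ → ℝ)
    (hsum : ∀ k, 2 ≤ k → ∑ i ∈ Finset.Ico 1 k, σ i (k - i) = 1) :
    ∀ n : ℕ, 1 ≤ n → ∑ t ∈ trees n, Pσ σ t = 1 := by
  intro n
  induction n using Nat.strong_induction_on with
  | _ n ih =>
    match n with
    | 0 => intro h; omega
    | 1 => intro _; rw [trees]; simp [Pσ]
    | (m+2) =>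
      intro _
      rw [sum_trees_eq, ← hsum (m+2) (by omega)]
      refine Finset.sum_congr rfl fun k hk => ?_
      have hk' := Finset.mem_Ico.mp hk
      calc ∑ l ∈ trees k, ∑ r ∈ trees (m+2-k), Pσ σ (BTree.node l r)
          = ∑ l ∈ trees k, ∑ r ∈ trees (m+2-k), σ k (m+2-k) * (Pσ σ l * Pσ σ r) := by
            refine Finset.sum_congr rfl fun l hl => Finset.sum_congr rfl fun r hr => ?_
            simp only [Pσ, size_of_mem_trees _ l hl, size_of_mem_trees _ r hr]; ring
        _ = σ k (m+2-k) * ((∑ l ∈ trees k, Pσ σ l) * (∑ r ∈ trees (m+2-k), Pσ σ r)) := by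
            rw [Finset.sum_mul_sum, Finset.mul_sum]
            refine Finset.sum_congr rfl fun l _ => ?_
            rw [Finset.mul_sum]
        _ = σ k (m+2-k) := by
            rw [ih k (by omega) (by omega), ih (m+2-k) (by omega) (by omega)]; ring

noncomputable def Wt (c : ℝ) : BTree → ℝ
  | .leaf => 1
  | .node l r => c * (Wt c l + Wt c r)

lemma Wt_pos {c : ℝ} (hc : 1 ≤ c) (t : BTree) : 0 < Wt c t := by
  induction t with
  | leaf => norm_num [Wt]
  | node l r hl hr =>
    simp only [Wt]
    exact mul_pos (by linarith) (by linarith)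

lemma pow_height_le_Wt {c : ℝ} (hc : 1 ≤ c) (t : BTree) : c ^ t.height ≤ Wt c t := by
  induction t with
  | leaf => simp [BTree.height, Wt]
  | node l r hl hr =>
    have hmax : c ^ (max l.height r.height) ≤ Wt c l + Wt c r := by
      rcases max_cases l.height r.height with ⟨h, _⟩ | ⟨h, _⟩ <;> rw [h]
      · exact le_add_of_le_of_nonneg hl (Wt_pos hc r).le
      · exact le_add_of_nonneg_of_le (Wt_pos hc l).le hr
    calc c ^ (BTree.node l r).height = c * c ^ (max l.height r.height) := by
          rw [BTree.height, pow_add, pow_one]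
      _ ≤ c * (Wt c l + Wt c r) := mul_le_mul_of_nonneg_left hmax (by linarith)
      _ = Wt c (BTree.node l r) := rfl

lemma Wt_le_size {c : ℝ} (hc : 1 ≤ c) (t : BTree) :
    Wt c t ≤ (t.size : ℝ) * c ^ (t.size - 1) := by
  induction t with
  | leaf => simp [Wt, BTree.size]
  | node l r hl hr =>
    have h0 : (0:ℝ) < c := by linarith
    have hls := l.one_le_size
    have hrs := r.one_le_size
    have h1 : c ^ (l.size - 1) ≤ c ^ (l.size + r.size - 2) := pow_le_pow_right₀ hc (by omega)
    have h2 : c ^ (r.size - 1) ≤ c ^ (l.size + r.size - 2) := pow_le_pow_right₀ hc (by omega)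
    have e : l.size + r.size - 2 + 1 = l.size + r.size - 1 := by omega
    calc Wt c (BTree.node l r) = c * (Wt c l + Wt c r) := rfl
      _ ≤ c * ((l.size : ℝ) * c ^ (l.size + r.size - 2)
            + (r.size : ℝ) * c ^ (l.size + r.size - 2)) := by
          refine mul_le_mul_of_nonneg_left ?_ h0.le
          refine add_le_add (hl.trans ?_) (hr.trans ?_)
          · exact mul_le_mul_of_nonneg_left h1 (by positivity)
          · exact mul_le_mul_of_nonneg_left h2 (by positivity)
      _ = ((l.size + r.size : ℕ) : ℝ) * c ^ (l.size + r.size - 2 + 1) := by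
          push_cast; ring
      _ = ((BTree.node l r).size : ℝ) * c ^ ((BTree.node l r).size - 1) := by
          rw [e]; rfl

lemma real_rpow_add_le {x y p : ℝ} (hx : 0 ≤ x) (hy : 0 ≤ y) (hp : 1 ≤ p) :
    x ^ p + y ^ p ≤ (x + y) ^ p := by
  lift x to NNReal using hx
  lift y to NNReal using hy
  have := NNReal.add_rpow_le_rpow_add x y hp
  exact_mod_cast this

lemma convexOn_const_rpow {c : ℝ} (hc : 0 < c) :
    ConvexOn ℝ Set.univ fun x : ℝ => c ^ x := by
  refine ⟨convex_univ, fun x _ y _ a b ha hb hab => ?_⟩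
  simp only [smul_eq_mul]
  rw [Real.rpow_def_of_pos hc, Real.rpow_def_of_pos hc, Real.rpow_def_of_pos hc]
  have h := convexOn_exp.2 (Set.mem_univ (Real.log c * x)) (Set.mem_univ (Real.log c * y))
    ha hb hab
  simp only [smul_eq_mul] at h
  calc Real.exp (Real.log c * (a * x + b * y))
      = Real.exp (a * (Real.log c * x) + b * (Real.log c * y)) := by ring_nf
    _ ≤ a * Real.exp (Real.log c * x) + b * Real.exp (Real.log c * y) := h

set_option maxHeartbeats 1600000 in
lemma Lsum_le (σ : ℕ → ℕ → ℝ)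
    (hrange : ∀ i j, 0 ≤ σ i j ∧ σ i j ≤ 1)
    (hsum : ∀ k, 2 ≤ k → ∑ i ∈ Finset.Ico 1 k, σ i (k - i) = 1)
    (φ : ℕ → ℝ) (hφdec : Antitone φ) (hφrange : ∀ n, 0 < φ n ∧ φ n ≤ 1)
    (γ : ℝ) (hγ0 : 0 < γ) (hγ : γ < 1 / 2) (N : ℕ)
    (hbal : ∀ n : ℕ, N ≤ n →
      φ n ≤ ∑ k ∈ (Finset.Ico 1 n).filter
        (fun k : ℕ => γ * (n : ℝ) ≤ (k : ℝ) ∧ (k : ℝ) ≤ (1 - γ) * (n : ℝ)), σ k (n - k))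
    (n : ℕ) :
    ∀ m : ℕ, 1 ≤ m → m ≤ n →
      ∑ t ∈ trees m, Pσ σ t * Wt (1 + φ n) t
        ≤ 2 ^ N * (m : ℝ) ^
            (Real.logb 2 (2 * (φ n)⁻¹ * (1 + φ n)) / Real.logb 2 (1 - γ)⁻¹) := by
  have hφ : 0 < φ n := (hφrange n).1
  have hφ1 : φ n ≤ 1 := (hφrange n).2
  set c : ℝ := 1 + φ n with hc_def
  set κ : ℝ := Real.logb 2 (2 * (φ n)⁻¹ * (1 + φ n)) / Real.logb 2 (1 - γ)⁻¹ with hκ_def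
  have hc1 : 1 < c := by simp [hc_def]; linarith
  have hc0 : (0:ℝ) < c := by linarith
  have hc2 : c ≤ 2 := by simp [hc_def]; linarith
  have hγ1 : (0:ℝ) < 1 - γ := by linarith
  have hγ2 : 1 - γ < 1 := by linarith
  have hinv1 : 1 < (1 - γ)⁻¹ := (one_lt_inv₀ hγ1).mpr hγ2
  have hinv2 : (1 - γ)⁻¹ ≤ 2 := by
    rw [inv_le_comm₀ hγ1 (by norm_num)]
    linarith
  have hden_pos : 0 < Real.logb 2 (1 - γ)⁻¹ := Real.logb_pos one_lt_two hinv1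
  have hden_le1 : Real.logb 2 (1 - γ)⁻¹ ≤ 1 := by
    have := Real.logb_le_logb_of_le one_lt_two (by linarith : (0:ℝ) < (1-γ)⁻¹) hinv2
    simpa using this
  have hX2 : (2:ℝ) ≤ 2 * (φ n)⁻¹ * c := by
    have h1 : (1:ℝ) ≤ (φ n)⁻¹ := (one_le_inv₀ hφ).mpr hφ1
    nlinarith
  have hXpos : (0:ℝ) < 2 * (φ n)⁻¹ * c := by linarith
  have hnum1 : 1 ≤ Real.logb 2 (2 * (φ n)⁻¹ * c) := by
    have := Real.logb_le_logb_of_le one_lt_two (by norm_num : (0:ℝ) < 2) hX2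
    simpa using this
  have hκ1 : 1 ≤ κ := by
    rw [hκ_def, le_div_iff₀ hden_pos, one_mul]
    exact hden_le1.trans hnum1
  have hκ0 : 0 ≤ κ := by linarith
  -- key: (1-γ) ^ κ = φ n / (2 * c)
  have hφne : φ n ≠ 0 := ne_of_gt hφ
  have hpow : (1 - γ) ^ κ = φ n / (2 * (1 + φ n)) := by
    have hlog2 : Real.log 2 ≠ 0 := by
      have := Real.log_pos one_lt_two; linarith
    have hlogI : Real.log ((1 - γ)⁻¹) ≠ 0 := by
      have := Real.log_pos hinv1; linarith
    have hXpos' : (0:ℝ) < 2 * (φ n)⁻¹ * (1 + φ n) := by positivity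
    have hκ_eq : κ * Real.log ((1 - γ)⁻¹) = Real.log (2 * (φ n)⁻¹ * (1 + φ n)) := by
      rw [hκ_def]
      rw [Real.logb, Real.logb, div_div_div_comm, div_self hlog2, div_one,
        div_mul_cancel₀ _ hlogI]
    have hloggm : Real.log (1 - γ) = - Real.log ((1 - γ)⁻¹) := by rw [Real.log_inv, neg_neg]
    rw [Real.rpow_def_of_pos hγ1, hloggm,
      show -Real.log ((1 - γ)⁻¹) * κ = -(κ * Real.log ((1 - γ)⁻¹)) by ring,
      hκ_eq, Real.exp_neg, Real.exp_log hXpos']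
    rw [eq_div_iff (by positivity : (2:ℝ) * (1 + φ n) ≠ 0)]
    field_simp
  intro m
  induction m using Nat.strong_induction_on with
  | _ m ih =>
    intro hm1 hmn
    by_cases hbase : m = 1 ∨ m ≤ N
    · -- base case
      have hWb : ∑ t ∈ trees m, Pσ σ t * Wt c t
          ≤ ∑ t ∈ trees m, Pσ σ t * ((m:ℝ) * c ^ (m - 1)) := by
        refine Finset.sum_le_sum fun t ht => ?_
        have hW := Wt_le_size hc1.le t
        rw [size_of_mem_trees _ t ht] at hW
        exact mul_le_mul_of_nonneg_left hW (Pσ_nonneg σ (fun i j => (hrange i j).1) t)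
      rw [← Finset.sum_mul, sum_Pσ_eq_one σ hsum m hm1, one_mul] at hWb
      refine hWb.trans ?_
      have h1 : c ^ (m - 1) ≤ (2:ℝ) ^ N := by
        calc c ^ (m - 1) ≤ (2:ℝ) ^ (m - 1) :=
            pow_le_pow_left₀ hc0.le hc2 _
          _ ≤ (2:ℝ) ^ N := pow_le_pow_right₀ one_le_two (by omega)
      have h2 : (m:ℝ) ≤ (m:ℝ) ^ κ := by
        calc (m:ℝ) = (m:ℝ) ^ (1:ℝ) := (Real.rpow_one _).symm
          _ ≤ (m:ℝ) ^ κ := Real.rpow_le_rpow_of_exponent_le (by exact_mod_cast hm1) hκ1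
      calc (m:ℝ) * c ^ (m - 1) ≤ ((m:ℝ) ^ κ) * (2:ℝ) ^ N := by
            refine mul_le_mul h2 h1 (by positivity) (by positivity)
        _ = 2 ^ N * (m:ℝ) ^ κ := mul_comm _ _
    · -- inductive step
      push_neg at hbase
      obtain ⟨hne1, hNm⟩ := hbase
      have hm2 : 2 ≤ m := by omega
      obtain ⟨m', rfl⟩ : ∃ m', m = m' + 2 := ⟨m - 2, by omega⟩
      set M : ℕ := m' + 2 with hM_def
      -- recursion formula
      have hrec : ∑ t ∈ trees M, Pσ σ t * Wt c t
          = ∑ k ∈ Finset.Ico 1 M, σ k (M - k) * c *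
              ((∑ t ∈ trees k, Pσ σ t * Wt c t) + (∑ t ∈ trees (M - k), Pσ σ t * Wt c t)) := by
        rw [show (∑ t ∈ trees M, Pσ σ t * Wt c t)
            = ∑ t ∈ trees (m' + 2), (fun t => Pσ σ t * Wt c t) t from rfl,
          sum_trees_eq (fun t => Pσ σ t * Wt c t) m']
        refine Finset.sum_congr rfl fun k hk => ?_
        have hk' := Finset.mem_Ico.mp hk
        calc ∑ l ∈ trees k, ∑ r ∈ trees (m' + 2 - k), Pσ σ (BTree.node l r) * Wt c (BTree.node l r)
            = ∑ l ∈ trees k, ∑ r ∈ trees (m' + 2 - k),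
                σ k (m' + 2 - k) * c *
                  ((Pσ σ l * Wt c l) * Pσ σ r + Pσ σ l * (Pσ σ r * Wt c r)) := by
              refine Finset.sum_congr rfl fun l hl => Finset.sum_congr rfl fun r hr => ?_
              simp only [Pσ, Wt, size_of_mem_trees _ l hl, size_of_mem_trees _ r hr]
              ring
          _ = σ k (m' + 2 - k) * c *
                ((∑ l ∈ trees k, Pσ σ l * Wt c l) * (∑ r ∈ trees (m' + 2 - k), Pσ σ r)
                  + (∑ l ∈ trees k, Pσ σ l) * (∑ r ∈ trees (m' + 2 - k), Pσ σ r * Wt c r)) := by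
              rw [Finset.sum_mul_sum, Finset.sum_mul_sum, ← Finset.sum_add_distrib,
                Finset.mul_sum]
              refine Finset.sum_congr rfl fun l _ => ?_
              rw [← Finset.sum_add_distrib, Finset.mul_sum]
          _ = σ k (M - k) * c *
                ((∑ t ∈ trees k, Pσ σ t * Wt c t) + (∑ t ∈ trees (M - k), Pσ σ t * Wt c t)) := by
              rw [sum_Pσ_eq_one σ hsum k (by omega), sum_Pσ_eq_one σ hsum (m' + 2 - k) (by omega)]
              rw [hM_def]
              ring_nf
      -- bound the recursion
      rw [hrec]
      have hMn : m' + 2 ≤ n := hmn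
      have hφM : φ n ≤ φ (m' + 2) := hφdec hMn
      have hchild : ∀ k, 1 ≤ k → k < m' + 2 → (∑ t ∈ trees k, Pσ σ t * Wt c t) ≤ 2 ^ N * (k:ℝ) ^ κ := fun k h1 h2 =>
        ih k h2 h1 (by omega)
      have hM0 : (0:ℝ) < (((m' + 2 : ℕ)) : ℝ) := by positivity
      have hKpos : (0:ℝ) < (2 ^ N * (((m' + 2 : ℕ)) : ℝ) ^ κ) :=
        mul_pos (pow_pos two_pos N) (Real.rpow_pos_of_pos hM0 κ)
      rw [← Finset.sum_filter_add_sum_filter_not (Finset.Ico 1 (m' + 2))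
        (fun k : ℕ => γ * ((m' + 2 : ℕ) : ℝ) ≤ (k : ℝ) ∧ (k : ℝ) ≤ (1 - γ) * ((m' + 2 : ℕ) : ℝ))]
      have hpq : (∑ k ∈ (Finset.Ico 1 (m' + 2)).filter (fun k : ℕ => γ * ((m' + 2 : ℕ) : ℝ) ≤ (k : ℝ) ∧ (k : ℝ) ≤ (1 - γ) * ((m' + 2 : ℕ) : ℝ)), σ k (m' + 2 - k))
          + (∑ k ∈ (Finset.Ico 1 (m' + 2)).filter (fun k => ¬ (fun k : ℕ => γ * ((m' + 2 : ℕ) : ℝ) ≤ (k : ℝ) ∧ (k : ℝ) ≤ (1 - γ) * ((m' + 2 : ℕ) : ℝ)) k), σ k (m' + 2 - k)) = 1 := by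
        rw [Finset.sum_filter_add_sum_filter_not]
        exact hsum (m' + 2) (by omega)
      have hp_lb : φ n ≤ ∑ k ∈ (Finset.Ico 1 (m' + 2)).filter (fun k : ℕ => γ * ((m' + 2 : ℕ) : ℝ) ≤ (k : ℝ) ∧ (k : ℝ) ≤ (1 - γ) * ((m' + 2 : ℕ) : ℝ)), σ k (m' + 2 - k) :=
        le_trans hφM (hbal (m' + 2) (by omega))
      have hq_nonneg : (0:ℝ) ≤ ∑ k ∈ (Finset.Ico 1 (m' + 2)).filter (fun k => ¬ (fun k : ℕ => γ * ((m' + 2 : ℕ) : ℝ) ≤ (k : ℝ) ∧ (k : ℝ) ≤ (1 - γ) * ((m' + 2 : ℕ) : ℝ)) k), σ k (m' + 2 - k) :=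
        Finset.sum_nonneg fun k _ => (hrange k (m' + 2 - k)).1
      -- balanced part
      have hbal_bound : ∑ k ∈ (Finset.Ico 1 (m' + 2)).filter (fun k : ℕ => γ * ((m' + 2 : ℕ) : ℝ) ≤ (k : ℝ) ∧ (k : ℝ) ≤ (1 - γ) * ((m' + 2 : ℕ) : ℝ)),
          σ k (m' + 2 - k) * c * ((∑ t ∈ trees k, Pσ σ t * Wt c t) + (∑ t ∈ trees (m' + 2 - k), Pσ σ t * Wt c t))
          ≤ (∑ k ∈ (Finset.Ico 1 (m' + 2)).filter (fun k : ℕ => γ * ((m' + 2 : ℕ) : ℝ) ≤ (k : ℝ) ∧ (k : ℝ) ≤ (1 - γ) * ((m' + 2 : ℕ) : ℝ)), σ k (m' + 2 - k)) * (φ n * (2 ^ N * (((m' + 2 : ℕ)) : ℝ) ^ κ)) := by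
        rw [Finset.sum_mul]
        refine Finset.sum_le_sum fun k hk => ?_
        simp only [Finset.mem_filter, Finset.mem_Ico] at hk
        obtain ⟨⟨hk1, hk2⟩, hkP1, hkP2⟩ := hk
        have hkM : ((m' + 2 - k : ℕ) : ℝ) = (((m' + 2 : ℕ)) : ℝ) - (k : ℝ) := by
          have : k ≤ m' + 2 := by omega
          push_cast [Nat.cast_sub this]
          ring
        have hub : ((1 - γ) * (((m' + 2 : ℕ)) : ℝ)) ^ κ
            = (φ n / (2 * (1 + φ n))) * (((m' + 2 : ℕ)) : ℝ) ^ κ := by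
          rw [Real.mul_rpow hγ1.le hM0.le, hpow]
        have hL1 : (∑ t ∈ trees k, Pσ σ t * Wt c t) ≤ 2 ^ N * ((1 - γ) * (((m' + 2 : ℕ)) : ℝ)) ^ κ := by
          refine (hchild k hk1 hk2).trans ?_
          have h := Real.rpow_le_rpow (by positivity : (0:ℝ) ≤ (k:ℝ)) hkP2 hκ0
          exact mul_le_mul_of_nonneg_left h (by positivity)
        have hkM1 : 1 ≤ m' + 2 - k := by
          rcases Nat.lt_or_ge k (m' + 2) with h | h
          · omega
          · exfalso
            have hk2' : (k:ℝ) ≤ (1 - γ) * ((m' + 2 : ℕ) : ℝ) := hkP2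
            have : ((m' + 2 : ℕ) : ℝ) ≤ (k : ℝ) := by exact_mod_cast h
            nlinarith
        have hL2 : (∑ t ∈ trees (m' + 2 - k), Pσ σ t * Wt c t) ≤ 2 ^ N * ((1 - γ) * (((m' + 2 : ℕ)) : ℝ)) ^ κ := by
          refine (hchild (m' + 2 - k) hkM1 (by omega)).trans ?_
          have hle : ((m' + 2 - k : ℕ) : ℝ) ≤ (1 - γ) * (((m' + 2 : ℕ)) : ℝ) := by
            rw [hkM]
            linarith
          have h := Real.rpow_le_rpow (by positivity : (0:ℝ) ≤ ((m' + 2 - k:ℕ):ℝ)) hle hκ0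
          exact mul_le_mul_of_nonneg_left h (by positivity)
        have hsum2 : (∑ t ∈ trees k, Pσ σ t * Wt c t) + (∑ t ∈ trees (m' + 2 - k), Pσ σ t * Wt c t)
            ≤ 2 * (2 ^ N * ((φ n / (2 * (1 + φ n))) * (((m' + 2 : ℕ)) : ℝ) ^ κ)) := by
          rw [← hub]; linarith
        have hσ := (hrange k (m' + 2 - k)).1
        calc σ k (m' + 2 - k) * c * ((∑ t ∈ trees k, Pσ σ t * Wt c t) + (∑ t ∈ trees (m' + 2 - k), Pσ σ t * Wt c t))
            ≤ σ k (m' + 2 - k) * c *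
                (2 * (2 ^ N * ((φ n / (2 * (1 + φ n))) * (((m' + 2 : ℕ)) : ℝ) ^ κ))) := by
              refine mul_le_mul_of_nonneg_left hsum2 (by positivity)
          _ = σ k (m' + 2 - k) * (φ n * (2 ^ N * (((m' + 2 : ℕ)) : ℝ) ^ κ)) := by
              rw [hc_def]
              field_simp
      -- unbalanced part
      have hunbal_bound : ∑ k ∈ (Finset.Ico 1 (m' + 2)).filter (fun k => ¬ (fun k : ℕ => γ * ((m' + 2 : ℕ) : ℝ) ≤ (k : ℝ) ∧ (k : ℝ) ≤ (1 - γ) * ((m' + 2 : ℕ) : ℝ)) k),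
          σ k (m' + 2 - k) * c * ((∑ t ∈ trees k, Pσ σ t * Wt c t) + (∑ t ∈ trees (m' + 2 - k), Pσ σ t * Wt c t))
          ≤ (∑ k ∈ (Finset.Ico 1 (m' + 2)).filter (fun k => ¬ (fun k : ℕ => γ * ((m' + 2 : ℕ) : ℝ) ≤ (k : ℝ) ∧ (k : ℝ) ≤ (1 - γ) * ((m' + 2 : ℕ) : ℝ)) k), σ k (m' + 2 - k))
              * (c * (2 ^ N * (((m' + 2 : ℕ)) : ℝ) ^ κ)) := by
        rw [Finset.sum_mul]
        refine Finset.sum_le_sum fun k hk => ?_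
        simp only [Finset.mem_filter, Finset.mem_Ico] at hk
        obtain ⟨⟨hk1, hk2⟩, -⟩ := hk
        have hkle : k ≤ m' + 2 := by omega
        have hkM : ((m' + 2 - k : ℕ) : ℝ) = (((m' + 2 : ℕ)) : ℝ) - (k : ℝ) := by
          push_cast [Nat.cast_sub hkle]
          ring
        have hL1 := hchild k hk1 hk2
        have hL2 := hchild (m' + 2 - k) (by omega) (by omega)
        have hadd : (k:ℝ) ^ κ + ((m' + 2 - k:ℕ):ℝ) ^ κ ≤ (((m' + 2 : ℕ)) : ℝ) ^ κ := by
          have h := real_rpow_add_le (by positivity : (0:ℝ) ≤ (k:ℝ))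
            (by positivity : (0:ℝ) ≤ ((m' + 2 - k:ℕ):ℝ)) hκ1
          have he : (k:ℝ) + ((m' + 2 - k:ℕ):ℝ) = (((m' + 2 : ℕ)) : ℝ) := by rw [hkM]; ring
          rwa [he] at h
        have hsum2 : (∑ t ∈ trees k, Pσ σ t * Wt c t) + (∑ t ∈ trees (m' + 2 - k), Pσ σ t * Wt c t) ≤ (2 ^ N * (((m' + 2 : ℕ)) : ℝ) ^ κ) := by
          calc (∑ t ∈ trees k, Pσ σ t * Wt c t) + (∑ t ∈ trees (m' + 2 - k), Pσ σ t * Wt c t)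
              ≤ 2 ^ N * (k:ℝ) ^ κ + 2 ^ N * ((m' + 2 - k:ℕ):ℝ) ^ κ := by linarith
            _ = 2 ^ N * ((k:ℝ) ^ κ + ((m' + 2 - k:ℕ):ℝ) ^ κ) := by ring
            _ ≤ (2 ^ N * (((m' + 2 : ℕ)) : ℝ) ^ κ) := mul_le_mul_of_nonneg_left hadd (by positivity)
        have hσ := (hrange k (m' + 2 - k)).1
        calc σ k (m' + 2 - k) * c * ((∑ t ∈ trees k, Pσ σ t * Wt c t) + (∑ t ∈ trees (m' + 2 - k), Pσ σ t * Wt c t))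
            ≤ σ k (m' + 2 - k) * c * (2 ^ N * (((m' + 2 : ℕ)) : ℝ) ^ κ) :=
              mul_le_mul_of_nonneg_left hsum2 (by positivity)
          _ = σ k (m' + 2 - k) * (c * (2 ^ N * (((m' + 2 : ℕ)) : ℝ) ^ κ)) := by ring
      -- combine
      refine le_trans (add_le_add hbal_bound hunbal_bound) ?_
      set p : ℝ := ∑ k ∈ (Finset.Ico 1 (m' + 2)).filter (fun k : ℕ => γ * ((m' + 2 : ℕ) : ℝ) ≤ (k : ℝ) ∧ (k : ℝ) ≤ (1 - γ) * ((m' + 2 : ℕ) : ℝ)), σ k (m' + 2 - k) with hp_def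
      set q : ℝ := ∑ k ∈ (Finset.Ico 1 (m' + 2)).filter (fun k => ¬ (fun k : ℕ => γ * ((m' + 2 : ℕ) : ℝ) ≤ (k : ℝ) ∧ (k : ℝ) ≤ (1 - γ) * ((m' + 2 : ℕ) : ℝ)) k), σ k (m' + 2 - k)
        with hq_def
      have h1 : p * φ n + q * c = q + (p + q) * φ n := by rw [hc_def]; ring
      rw [hpq, one_mul] at h1
      have h2 : p * φ n + q * c ≤ 1 := by
        rw [h1]
        linarith
      calc p * (φ n * (2 ^ N * (((m' + 2 : ℕ)) : ℝ) ^ κ)) + q * (c * (2 ^ N * (((m' + 2 : ℕ)) : ℝ) ^ κ)) = (p * φ n + q * c) * (2 ^ N * (((m' + 2 : ℕ)) : ℝ) ^ κ) := by ring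
        _ ≤ 1 * (2 ^ N * (((m' + 2 : ℕ)) : ℝ) ^ κ) := mul_le_mul_of_nonneg_right h2 hKpos.le
        _ = (2 ^ N * (((m' + 2 : ℕ)) : ℝ) ^ κ) := one_mul _

open Filter Asymptotics

lemma alg_helper (A B L d N : ℝ) (hA : A ≠ 0) (hB : B ≠ 0) (hL : L ≠ 0) (hd : d ≠ 0) :
    (1 / d) * (A / B) * L * (1 + N / (A / d * L)) = (A / d * L + N) / B := by
  field_simp

theorem weakly_balanced_expected_height (σ : ℕ → ℕ → ℝ)
    (hrange : ∀ i j, 0 ≤ σ i j ∧ σ i j ≤ 1)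
    (hsum : ∀ k, 2 ≤ k → ∑ i ∈ Finset.Ico 1 k, σ i (k - i) = 1)
    (φ : ℕ → ℝ) (hφdec : Antitone φ) (hφrange : ∀ n, 0 < φ n ∧ φ n ≤ 1)
    (γ : ℝ) (hγ0 : 0 < γ) (hγ : γ < 1 / 2) (N : ℕ)
    (hbal : ∀ n : ℕ, N ≤ n →
      φ n ≤ ∑ k ∈ (Finset.Ico 1 n).filter
        (fun k : ℕ => γ * (n : ℝ) ≤ (k : ℝ) ∧ (k : ℝ) ≤ (1 - γ) * (n : ℝ)), σ k (n - k)) :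
    (∀ n : ℕ, 1 ≤ n →
      expH σ n ≤
        ((Real.logb 2 (2 * (φ n)⁻¹ * (1 + φ n)) / Real.logb 2 (1 - γ)⁻¹) *
          Real.logb 2 n + N) / Real.logb 2 (1 + φ n)) ∧
    (∃ g : ℕ → ℝ, g =o[atTop] (fun _ => (1 : ℝ)) ∧
      ∀ᶠ n : ℕ in atTop,
        expH σ n ≤
          (1 / Real.logb 2 (1 / (1 - γ))) *
            (Real.logb 2 (2 * (φ n)⁻¹ * (1 + φ n)) / Real.logb 2 (1 + φ n)) *
            Real.logb 2 n * (1 + g n)) := by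
  have hσ0 : ∀ i j, 0 ≤ σ i j := fun i j => (hrange i j).1
  have part1 : ∀ n : ℕ, 1 ≤ n →
      expH σ n ≤
        ((Real.logb 2 (2 * (φ n)⁻¹ * (1 + φ n)) / Real.logb 2 (1 - γ)⁻¹) *
          Real.logb 2 n + N) / Real.logb 2 (1 + φ n) := by
    intro n hn
    have hφ : 0 < φ n := (hφrange n).1
    have hφ1 : φ n ≤ 1 := (hφrange n).2
    have hc1 : 1 < 1 + φ n := by linarith
    have hc0 : (0:ℝ) < 1 + φ n := by linarith
    set κ : ℝ := Real.logb 2 (2 * (φ n)⁻¹ * (1 + φ n)) / Real.logb 2 (1 - γ)⁻¹ with hκ_def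
    -- Jensen
    have hJ : (1 + φ n) ^ (expH σ n) ≤ expPow σ (1 + φ n) n := by
      have h := (convexOn_const_rpow hc0).map_sum_le (t := trees n)
        (w := fun t => Pσ σ t) (p := fun t => (t.height : ℝ))
        (fun t _ => Pσ_nonneg σ hσ0 t) (sum_Pσ_eq_one σ hsum n hn)
        (fun t _ => Set.mem_univ _)
      simp only [smul_eq_mul] at h
      calc (1 + φ n) ^ (expH σ n)
          = (1 + φ n) ^ (∑ t ∈ trees n, Pσ σ t * (t.height : ℝ)) := rfl
        _ ≤ ∑ t ∈ trees n, Pσ σ t * (1 + φ n) ^ ((t.height : ℕ) : ℝ) := h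
        _ = expPow σ (1 + φ n) n := by
            refine Finset.sum_congr rfl fun t _ => ?_
            rw [Real.rpow_natCast]
    have hPL : expPow σ (1 + φ n) n ≤ ∑ t ∈ trees n, Pσ σ t * Wt (1 + φ n) t := by
      refine Finset.sum_le_sum fun t _ => ?_
      exact mul_le_mul_of_nonneg_left (pow_height_le_Wt hc1.le t) (Pσ_nonneg σ hσ0 t)
    have hmain := Lsum_le σ hrange hsum φ hφdec hφrange γ hγ0 hγ N hbal n n hn le_rfl
    have hchain : (1 + φ n) ^ (expH σ n) ≤ 2 ^ N * (n:ℝ) ^ κ :=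
      le_trans (le_trans hJ hPL) hmain
    have hlogc : 0 < Real.logb 2 (1 + φ n) := Real.logb_pos one_lt_two hc1
    rw [le_div_iff₀ hlogc]
    have hlhs : Real.logb 2 ((1 + φ n) ^ (expH σ n)) = expH σ n * Real.logb 2 (1 + φ n) :=
      Real.logb_rpow_eq_mul_logb_of_pos hc0
    have hn0 : (0:ℝ) < (n:ℝ) := by exact_mod_cast hn
    have hrhs : Real.logb 2 ((2:ℝ) ^ N * (n:ℝ) ^ κ) = N + κ * Real.logb 2 n := by
      rw [Real.logb_mul (by positivity) (by positivity)]
      rw [Real.logb_rpow_eq_mul_logb_of_pos hn0]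
      congr 1
      rw [← Real.rpow_natCast 2 N, Real.logb_rpow (by norm_num)]
      norm_num
    have hmono := Real.logb_le_logb_of_le one_lt_two
      (Real.rpow_pos_of_pos hc0 (expH σ n)) hchain
    rw [hlhs, hrhs] at hmono
    linarith
  refine ⟨part1, ?_⟩
  -- part 2
  set den : ℝ := Real.logb 2 (1 - γ)⁻¹ with hden_def
  have hγ1 : (0:ℝ) < 1 - γ := by linarith
  have hγ2 : 1 - γ < 1 := by linarith
  have hinv1 : 1 < (1 - γ)⁻¹ := (one_lt_inv₀ hγ1).mpr hγ2
  have hden_pos : 0 < den := Real.logb_pos one_lt_two hinv1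
  have hnum1 : ∀ n : ℕ, 1 ≤ Real.logb 2 (2 * (φ n)⁻¹ * (1 + φ n)) := by
    intro n
    have hφ : 0 < φ n := (hφrange n).1
    have hφ1 : φ n ≤ 1 := (hφrange n).2
    have h1 : (1:ℝ) ≤ (φ n)⁻¹ := (one_le_inv₀ hφ).mpr hφ1
    have hX2 : (2:ℝ) ≤ 2 * (φ n)⁻¹ * (1 + φ n) := by nlinarith
    have := Real.logb_le_logb_of_le one_lt_two (by norm_num : (0:ℝ) < 2) hX2
    simpa using this
  have hκpos : ∀ n : ℕ, 0 < Real.logb 2 (2 * (φ n)⁻¹ * (1 + φ n)) / den :=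
    fun n => div_pos (by linarith [hnum1 n]) hden_pos
  refine ⟨fun n => (N : ℝ) /
      ((Real.logb 2 (2 * (φ n)⁻¹ * (1 + φ n)) / den) * Real.logb 2 n), ?_, ?_⟩
  · rw [isLittleO_one_iff]
    have hlogtend : Tendsto (fun n : ℕ => Real.logb 2 (n : ℝ)) atTop atTop :=
      (Real.tendsto_logb_atTop one_lt_two).comp tendsto_natCast_atTop_atTop
    have hbound : Tendsto (fun n : ℕ => (N : ℝ) * den / Real.logb 2 (n : ℝ)) atTop (nhds 0) :=
      Tendsto.div_atTop tendsto_const_nhds hlogtend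
    refine squeeze_zero' ?_ ?_ hbound
    · filter_upwards [eventually_ge_atTop 2] with n hn
      have hlog : 0 < Real.logb 2 (n : ℝ) := by
        refine Real.logb_pos one_lt_two ?_
        exact_mod_cast hn
      exact div_nonneg (Nat.cast_nonneg N) (mul_nonneg (hκpos n).le hlog.le)
    · filter_upwards [eventually_ge_atTop 2] with n hn
      have hlog : 0 < Real.logb 2 (n : ℝ) := by
        refine Real.logb_pos one_lt_two ?_
        exact_mod_cast hn
      rw [div_le_div_iff₀ (mul_pos (hκpos n) hlog) hlog]
      have h1 : 1 / den ≤ Real.logb 2 (2 * (φ n)⁻¹ * (1 + φ n)) / den :=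
        (div_le_div_iff_of_pos_right hden_pos).mpr (hnum1 n)
      have h2 : (0:ℝ) ≤ (N:ℝ) := by positivity
      calc (N:ℝ) * Real.logb 2 (n:ℝ)
          = ((N:ℝ) * den) * ((1 / den) * Real.logb 2 (n:ℝ)) := by
            field_simp
        _ ≤ ((N:ℝ) * den) * ((Real.logb 2 (2 * (φ n)⁻¹ * (1 + φ n)) / den) * Real.logb 2 (n:ℝ)) := by
            refine mul_le_mul_of_nonneg_left ?_ (by positivity)
            exact mul_le_mul_of_nonneg_right h1 hlog.le
  · filter_upwards [eventually_ge_atTop 2] with n hn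
    have hφ : 0 < φ n := (hφrange n).1
    have hc1 : 1 < 1 + φ n := by linarith
    have hlogc : 0 < Real.logb 2 (1 + φ n) := Real.logb_pos one_lt_two hc1
    have hlog : 0 < Real.logb 2 (n : ℝ) := by
      refine Real.logb_pos one_lt_two ?_
      exact_mod_cast hn
    have hκn := hκpos n
    have hA1 := hnum1 n
    have halg := alg_helper (Real.logb 2 (2 * (φ n)⁻¹ * (1 + φ n))) (Real.logb 2 (1 + φ n))
      (Real.logb 2 (n:ℝ)) den (N:ℝ) (by linarith) hlogc.ne' hlog.ne' hden_pos.ne'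
    rw [one_div (1 - γ), halg]
    exact part1 n (by omega)
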